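/- arXiv:2404.01830 — 3 statements merged into one kernel-verified Lean document; each statement's English description precedes it below -/
import Mathlib

section
/- In the setting of the single-context doubly-robust estimator Ẑ = (π(A)/μ(A))·(r(A) - Q(A)) + V_π with V_π = ∑_a π(a) Q(a), the variance satisfies Var[Ẑ] = ∑_a (π(a) r(a) - F(a))²/μ(a) - (∑_a (π(a) r(a) - F(a)))², where F(a) = π(a) Q(a); equivalently Var[Ẑ] = ‖π·r - F‖²_M for M = diag(1/μ(a)) - J. -/
/-!
With `g = π·r - F`, the estimator is `g(A) / μ(A)` plus the constant `V_π`, which does not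
affect the variance. Since `E[g(A)/μ(A)] = ∑ g` and `E[(g(A)/μ(A))²] = ∑ g²/μ`, the variance is
`∑ g²/μ - (∑ g)²`, and this is exactly the quadratic form of `diag(1/μ) - J` at `g`.
-/

open Matrix BigOperators

/-- Expectation of `f A` for `A ~ μ` on `Fin K`. -/
def expec {K : ℕ} (μ : Fin K → ℝ) (f : Fin K → ℝ) : ℝ := ∑ a, μ a * f a

/-- Variance of `f A` for `A ~ μ`. -/
def variance' {K : ℕ} (μ : Fin K → ℝ) (f : Fin K → ℝ) : ℝ :=
  expec μ (fun a => (f a - expec μ f) ^ 2)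

section Variance

variable {K : ℕ} {μ : Fin K → ℝ}

lemma expec_add_const (hμsum : ∑ a, μ a = 1) (f : Fin K → ℝ) (c : ℝ) :
    expec μ (fun a => f a + c) = expec μ f + c := by
  simp only [expec, mul_add, Finset.sum_add_distrib, ← Finset.sum_mul, hμsum, one_mul]

lemma variance'_add_const (hμsum : ∑ a, μ a = 1) (f : Fin K → ℝ) (c : ℝ) :
    variance' μ (fun a => f a + c) = variance' μ f := by
  simp only [variance', expec_add_const hμsum, add_sub_add_right_eq_sub]

lemma variance'_eq_expec_sq_sub_sq (hμsum : ∑ a, μ a = 1) (f : Fin K → ℝ) :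
    variance' μ f = expec μ (fun a => f a ^ 2) - expec μ f ^ 2 := by
  have hexpand : ∀ a, μ a * (f a - expec μ f) ^ 2
      = μ a * f a ^ 2 - 2 * expec μ f * (μ a * f a) + μ a * expec μ f ^ 2 := fun a => by ring
  simp only [variance', expec] at hexpand ⊢
  simp only [hexpand, Finset.sum_add_distrib, Finset.sum_sub_distrib, ← Finset.mul_sum,
    ← Finset.sum_mul, hμsum]
  ring

lemma variance'_div (hμ : ∀ a, μ a ≠ 0) (hμsum : ∑ a, μ a = 1) (g : Fin K → ℝ) :
    variance' μ (fun a => g a / μ a) = ∑ a, g a ^ 2 / μ a - (∑ a, g a) ^ 2 := by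
  have hsq : ∀ a, μ a * (g a / μ a) ^ 2 = g a ^ 2 / μ a := fun a => by
    field_simp [hμ a]
  have hlin : ∀ a, μ a * (g a / μ a) = g a := fun a => mul_div_cancel₀ _ (hμ a)
  rw [variance'_eq_expec_sq_sub_sq hμsum]
  simp only [expec, hsq, hlin]

end Variance

lemma dotProduct_diagonal_sub_ones_mulVec {n R : Type*} [Fintype n] [DecidableEq n]
    [CommRing R] (d v : n → R) :
    v ⬝ᵥ ((diagonal d - of fun _ _ => (1 : R)) *ᵥ v) = ∑ i, d i * v i ^ 2 - (∑ i, v i) ^ 2 := by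
  have hones : (of fun _ _ : n => (1 : R)) *ᵥ v = fun _ => ∑ i, v i := by
    ext i; simp only [mulVec, dotProduct, of_apply, one_mul]
  rw [sub_mulVec, dotProduct_sub, hones]
  simp only [dotProduct, mulVec_diagonal, sq, Finset.sum_mul]
  congr 1
  exact Finset.sum_congr rfl fun i _ => by ring

theorem stmt_4_general (K : ℕ) (μ π : Fin K → ℝ)
    (hμpos : ∀ a, 0 < μ a) (hμsum : ∑ a, μ a = 1)
    (r Q : Fin K → ℝ) (F : Fin K → ℝ) (hF : ∀ a, F a = π a * Q a) :
    variance' μ (fun a => π a / μ a * (r a - Q a) + ∑ b, π b * Q b)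
        = (∑ a, (π a * r a - F a) ^ 2 / μ a)
            - (∑ a, (π a * r a - F a)) ^ 2 ∧
      variance' μ (fun a => π a / μ a * (r a - Q a) + ∑ b, π b * Q b)
        = (fun a => π a * r a - F a) ⬝ᵥ
            ((Matrix.diagonal (fun a => (μ a)⁻¹)
              - Matrix.of (fun _ _ : Fin K => (1 : ℝ))) *ᵥ
              (fun a => π a * r a - F a)) := by
  have hμ : ∀ a, μ a ≠ 0 := fun a => (hμpos a).ne'
  have hestimator : (fun a => π a / μ a * (r a - Q a))
      = fun a => (π a * r a - F a) / μ a := by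
    funext a
    rw [hF, ← mul_sub, mul_comm, mul_div_assoc', mul_comm]
  have hvar := (variance'_add_const hμsum _ (∑ b, π b * Q b)).trans
    (hestimator ▸ variance'_div hμ hμsum fun a => π a * r a - F a)
  refine ⟨hvar, hvar.trans ?_⟩
  simp only [dotProduct_diagonal_sub_ones_mulVec, inv_mul_eq_div]

/-- variance of the single-context DR estimator:
`Var[Ẑ] = ∑_a (π(a)r(a) - F(a))²/μ(a) - (∑_a (π(a)r(a) - F(a)))²
        = ‖π·r - F‖²_M` where `F(a) = π(a)Q(a)` and `M = diag(1/μ) - J`. -/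
theorem stmt_4 (K : ℕ) (hK : 1 ≤ K) (μ π : Fin K → ℝ)
    (hμpos : ∀ a, 0 < μ a) (hμsum : ∑ a, μ a = 1)
    (hπnonneg : ∀ a, 0 ≤ π a) (hπsum : ∑ a, π a = 1)
    (r Q : Fin K → ℝ) (F : Fin K → ℝ) (hF : ∀ a, F a = π a * Q a) :
    variance' μ (fun a => π a / μ a * (r a - Q a) + ∑ b, π b * Q b)
        = (∑ a, (π a * r a - F a) ^ 2 / μ a)
            - (∑ a, (π a * r a - F a)) ^ 2 ∧
      variance' μ (fun a => π a / μ a * (r a - Q a) + ∑ b, π b * Q b)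
        = (fun a => π a * r a - F a) ⬝ᵥ
            ((Matrix.diagonal (fun a => (μ a)⁻¹)
              - Matrix.of (fun _ _ : Fin K => (1 : ℝ))) *ᵥ
              (fun a => π a * r a - F a)) :=
  stmt_4_general K μ π hμpos hμsum r Q F hF
end

section
/- Let X be a random state taking finitely many values, and conditional on X = x let A be drawn from μ(·|x) with μ(a|x) > 0. For the doubly-robust estimator Ẑ = (π(A|X)/μ(A|X))·(r(X,A) - Q(X,A)) + ∑_a π(a|X) Q(X,a), the law of total variance gives Var[Ẑ] = Var_X[V^π(X)] + E_X[ ‖π(·|X) r(X,·) - π(·|X) Q(X,·)‖²_{M_{μ(·|X)}} ], where V^π(x) = ∑_a π(a|x) r(x,a) and ‖v‖²_{M_μ} = ∑_a v(a)²/μ(a) - (∑_a v(a))². -/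
open BigOperators

/-- Squared seminorm `‖v‖²_{M_μ} = ∑ v(a)²/μ(a) - (∑ v(a))²`. -/
noncomputable def semiNormSq {K : ℕ} (μ : Fin K → ℝ) (v : Fin K → ℝ) : ℝ :=
  (∑ a, v a ^ 2 / μ a) - (∑ a, v a) ^ 2

/-- Expectation over the joint law of `(X, A)` where `X ~ p` on `S`
and, conditionally on `X = x`, `A ~ μ x` on `Fin K`. -/
def jointExpec {S : Type*} [Fintype S] {K : ℕ} (p : S → ℝ)
    (μ : S → Fin K → ℝ) (h : S → Fin K → ℝ) : ℝ :=
  ∑ x, p x * ∑ a, μ x a * h x a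

/-! Given `X = x`, the estimator has the form `v a / μ a + c` with `v a = π a (r a - Q a)`;
its conditional mean is `∑ v + c = V^π(x)` and its conditional variance is `‖v‖²_{M_μ}`.
The identity is then the law of total variance. -/

open Finset

section Expectation

variable {K : ℕ} {μ : Fin K → ℝ}

theorem expec_sub_sq (hμ : ∑ a, μ a = 1) (f : Fin K → ℝ) (c : ℝ) :
    expec μ (fun a => (f a - c) ^ 2) = variance' μ f + (expec μ f - c) ^ 2 := by
  unfold variance' expec
  generalize hm : ∑ a, μ a * f a = m
  have hexpand : ∀ a, μ a * (f a - c) ^ 2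
      = μ a * (f a - m) ^ 2 + 2 * (m - c) * (μ a * f a) + ((m - c) ^ 2 - 2 * (m - c) * m) * μ a :=
    fun a => by ring
  simp only [hexpand, sum_add_distrib, ← mul_sum, hμ, hm]
  ring

theorem expec_div_add (hμ0 : ∀ a, μ a ≠ 0) (hμ : ∑ a, μ a = 1) (v : Fin K → ℝ) (c : ℝ) :
    expec μ (fun a => v a / μ a + c) = ∑ a, v a + c := by
  simp only [expec, mul_add, mul_div_cancel₀ _ (hμ0 _), sum_add_distrib, ← sum_mul, hμ, one_mul]

theorem variance'_div_add (hμ0 : ∀ a, μ a ≠ 0) (hμ : ∑ a, μ a = 1) (v : Fin K → ℝ) (c : ℝ) :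
    variance' μ (fun a => v a / μ a + c) = semiNormSq μ v := by
  set s := ∑ a, v a
  have hexpand : ∀ a, μ a * (v a / μ a + c - (s + c)) ^ 2
      = v a ^ 2 / μ a - 2 * s * v a + s ^ 2 * μ a := fun a => by
    field_simp [hμ0 a]
    ring
  rw [variance', expec_div_add hμ0 hμ, expec, sum_congr rfl fun a _ => hexpand a,
    sum_add_distrib, sum_sub_distrib, ← mul_sum, ← mul_sum, hμ, semiNormSq]
  ring

end Expectation

theorem jointExpec_sub_sq {S : Type*} [Fintype S] {K : ℕ} (p : S → ℝ) {μ : S → Fin K → ℝ}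
    (hμ : ∀ x, ∑ a, μ x a = 1) (h : S → Fin K → ℝ) (c : ℝ) :
    jointExpec p μ (fun x a => (h x a - c) ^ 2)
      = ∑ x, p x * (expec (μ x) (h x) - c) ^ 2 + ∑ x, p x * variance' (μ x) (h x) := by
  rw [← sum_add_distrib]
  refine sum_congr rfl fun x _ => ?_
  rw [← mul_add, add_comm, ← expec_sub_sq (hμ x)]
  rfl

theorem stmt_8_general (S : Type*) [Fintype S] (K : ℕ)
    (p : S → ℝ)
    (μ π : S → Fin K → ℝ)
    (hμpos : ∀ x a, 0 < μ x a) (hμsum : ∀ x, ∑ a, μ x a = 1)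
    (r Q : S → Fin K → ℝ)
    (Z : S → Fin K → ℝ)
    (hZ : ∀ x a, Z x a = π x a / μ x a * (r x a - Q x a)
        + ∑ b, π x b * Q x b)
    (Vπ : S → ℝ) (hV : ∀ x, Vπ x = ∑ a, π x a * r x a) :
    jointExpec p μ (fun x a => (Z x a - jointExpec p μ Z) ^ 2)
      = (∑ x, p x * (Vπ x - ∑ y, p y * Vπ y) ^ 2)
        + ∑ x, p x *
            semiNormSq (μ x) (fun a => π x a * r x a - π x a * Q x a) := by
  have hμ0 : ∀ x a, μ x a ≠ 0 := fun x a => (hμpos x a).ne'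
  have hZ_eq : ∀ x, Z x = fun a =>
      (π x a * r x a - π x a * Q x a) / μ x a + ∑ b, π x b * Q x b :=
    fun x => funext fun a => by rw [hZ, ← mul_sub, mul_div_right_comm]
  have hmean : ∀ x, expec (μ x) (Z x) = Vπ x := fun x => by
    rw [hZ_eq, expec_div_add (hμ0 x) (hμsum x), sum_sub_distrib, sub_add_cancel, hV]
  have hjoint_mean : jointExpec p μ Z = ∑ y, p y * Vπ y :=
    sum_congr rfl fun x _ => congrArg (p x * ·) (hmean x)
  rw [jointExpec_sub_sq p hμsum, hjoint_mean]
  simp only [hmean]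
  congr 1
  exact sum_congr rfl fun x _ => by rw [hZ_eq x, variance'_div_add (hμ0 x) (hμsum x)]

/-- law-of-total-variance decomposition for the DR estimator
over a random state `X ~ p` and action `A ~ μ(·|X)`:
`Var[Ẑ] = Var_X[V^π(X)] + E_X ‖π(·|X) r(X,·) - π(·|X) Q(X,·)‖²_{M_{μ(·|X)}}`. -/
theorem stmt_8 (S : Type*) [Fintype S] (K : ℕ) (hK : 1 ≤ K)
    (p : S → ℝ) (hpnonneg : ∀ x, 0 ≤ p x) (hpsum : ∑ x, p x = 1)
    (μ π : S → Fin K → ℝ)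
    (hμpos : ∀ x a, 0 < μ x a) (hμsum : ∀ x, ∑ a, μ x a = 1)
    (hπnonneg : ∀ x a, 0 ≤ π x a) (hπsum : ∀ x, ∑ a, π x a = 1)
    (r Q : S → Fin K → ℝ)
    (Z : S → Fin K → ℝ)
    (hZ : ∀ x a, Z x a = π x a / μ x a * (r x a - Q x a)
        + ∑ b, π x b * Q x b)
    (Vπ : S → ℝ) (hV : ∀ x, Vπ x = ∑ a, π x a * r x a) :
    jointExpec p μ (fun x a => (Z x a - jointExpec p μ Z) ^ 2)
      = (∑ x, p x * (Vπ x - ∑ y, p y * Vπ y) ^ 2)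
        + ∑ x, p x *
            semiNormSq (μ x) (fun a => π x a * r x a - π x a * Q x a) :=
  stmt_8_general S K p μ π hμpos hμsum r Q Z hZ Vπ hV
end

section
/- (Telescoping DR identity) Consider a finite-horizon process with deterministic (for simplicity) rewards and known value functions: if Q^t(x,a) = E[r_t + γ V^{t+1}(x_{t+1}) | x_t = x, a_t = a] and V^t(x) = ∑_a π(a|x) Q^t(x,a), with V^T ≡ 0, then the DR estimator V̂ = ∑_{t=0}^{T-1} γ^t ρ_{0:t-1} [ρ_t (r_t - Q^t(x_t,a_t)) + V^t(x_t)] computed along a trajectory from μ has expectation E_μ[V̂] = E_{x_0}[V^0(x_0)] = V^π. -/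
open BigOperators

/-- Probability of a length-`T+1` trajectory `τ` (states and actions at
steps `0, …, T`) under initial distribution `p0`, transition kernel `P`
and logging policy `μ`. -/
def trajProb {S : Type*} [Fintype S] {K T : ℕ}
    (p0 : S → ℝ) (P : S → Fin K → S → ℝ) (μ : S → Fin K → ℝ)
    (τ : Fin (T + 1) → S × Fin K) : ℝ :=
  p0 (τ 0).1 *
    ∏ t : Fin (T + 1),
      (μ (τ t).1 (τ t).2 *
        if h : (t : ℕ) + 1 < T + 1 then P (τ t).1 (τ t).2 (τ ⟨t + 1, h⟩).1
        else 1)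

/-- Expectation of a trajectory functional under the logging policy. -/
def trajExpec {S : Type*} [Fintype S] {K T : ℕ}
    (p0 : S → ℝ) (P : S → Fin K → S → ℝ) (μ : S → Fin K → ℝ)
    (f : (Fin (T + 1) → S × Fin K) → ℝ) : ℝ :=
  ∑ τ : Fin (T + 1) → S × Fin K, trajProb p0 P μ τ * f τ

/-- Single-step importance ratio `ρ = π/μ` at a state-action pair. -/
noncomputable def ratio {S : Type*} {K : ℕ}
    (μ π : S → Fin K → ℝ) (y : S × Fin K) : ℝ :=
  π y.1 y.2 / μ y.1 y.2

/-- Cumulative importance ratio `ρ_{0:t-1} = ∏_{s < t} ρ_s`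
(empty product = 1). -/
noncomputable def ratioProd {S : Type*} {K T : ℕ}
    (μ π : S → Fin K → ℝ) (τ : Fin (T + 1) → S × Fin K) (t : ℕ) : ℝ :=
  ∏ s : Fin (T + 1), if (s : ℕ) < t then ratio μ π (τ s) else 1

lemma trajProb_cons {S : Type*} [Fintype S] {K T : ℕ}
    (p0 : S → ℝ) (P : S → Fin K → S → ℝ) (μ : S → Fin K → ℝ)
    (y : S × Fin K) (τ' : Fin (T + 1) → S × Fin K) :
    trajProb p0 P μ (Fin.cons y τ') = p0 y.1 * μ y.1 y.2 * trajProb (P y.1 y.2) P μ τ' := by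
  set c : Fin (T + 2) → S × Fin K := Fin.cons y τ' with hcdef
  unfold trajProb
  rw [Fin.prod_univ_succ]
  have key : ∀ t : Fin (T + 1),
      (μ (c t.succ).1 (c t.succ).2 *
        if h : ((t.succ : Fin (T + 2)) : ℕ) + 1 < T + 1 + 1 then
          P (c t.succ).1 (c t.succ).2 (c ⟨(t.succ : Fin (T + 2)) + 1, h⟩).1
        else 1) =
      (μ (τ' t).1 (τ' t).2 *
        if h : (t : ℕ) + 1 < T + 1 then P (τ' t).1 (τ' t).2 (τ' ⟨t + 1, h⟩).1
        else 1) := by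
    intro t
    have hc : c t.succ = τ' t := Fin.cons_succ _ _ _
    by_cases h : (t : ℕ) + 1 < T + 1
    · rw [dif_pos h, dif_pos (show ((t.succ : Fin (T+2)) : ℕ) + 1 < T + 1 + 1 by
        simpa using Nat.succ_lt_succ h)]
      have h2 : c ⟨((t.succ : Fin (T+2)) : ℕ) + 1, by simpa using Nat.succ_lt_succ h⟩
          = τ' ⟨(t : ℕ) + 1, h⟩ := by
        have h3 : (⟨((t.succ : Fin (T+2)) : ℕ) + 1, by simpa using Nat.succ_lt_succ h⟩ : Fin (T+2))
            = Fin.succ ⟨(t : ℕ) + 1, h⟩ := by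
          ext; simp
        rw [h3, hcdef, Fin.cons_succ]
      rw [hc, h2]
    · rw [dif_neg h, dif_neg (show ¬ (((t.succ : Fin (T+2)) : ℕ) + 1 < T + 1 + 1) by
        simpa using fun hh => h (Nat.lt_of_succ_lt_succ hh)), hc]
  rw [Finset.prod_congr rfl (fun t _ => key t)]
  have h0 : c 0 = y := rfl
  rw [h0]
  rw [dif_pos (show ((0 : Fin (T+2)) : ℕ) + 1 < T + 1 + 1 by simp)]
  have h1 : c ⟨((0 : Fin (T+2)) : ℕ) + 1, by simp⟩ = τ' 0 := rfl
  rw [h1]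
  ring

lemma sum_pi_succ {X : Type*} [Fintype X] {M : Type*} [AddCommMonoid M] {n : ℕ}
    (F : (Fin (n+1) → X) → M) :
    ∑ τ : Fin (n+1) → X, F τ = ∑ y : X, ∑ τ' : Fin n → X, F (Fin.cons y τ') := by
  rw [← (Fin.consEquiv fun _ => X).sum_comp F, Fintype.sum_prod_type]
  rfl

lemma trajProb_total {S : Type*} [Fintype S] {K : ℕ} :
    ∀ (T : ℕ) (p0 : S → ℝ) (P : S → Fin K → S → ℝ) (μ : S → Fin K → ℝ),
    (∀ x a, ∑ x', P x a x' = 1) → (∀ x, ∑ a, μ x a = 1) →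
    ∑ τ : Fin (T+1) → S × Fin K, trajProb p0 P μ τ = ∑ x, p0 x := by
  intro T
  induction T with
  | zero =>
    intro p0 P μ hPsum hμsum
    rw [sum_pi_succ]
    have : ∀ (y : S × Fin K) (τ' : Fin 0 → S × Fin K),
        trajProb p0 P μ (Fin.cons y τ') = p0 y.1 * μ y.1 y.2 := by
      intro y τ'
      unfold trajProb
      rw [Fin.prod_univ_one]
      have h0 : (Fin.cons y τ' : Fin 1 → S × Fin K) 0 = y := rfl
      rw [h0, dif_neg (by simp)]
      ring
    rw [Finset.sum_congr rfl (fun y _ => Finset.sum_congr rfl (fun τ' _ => this y τ'))]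
    have hone : ∀ y : S × Fin K, ∑ _τ' : Fin 0 → S × Fin K, p0 y.1 * μ y.1 y.2
        = p0 y.1 * μ y.1 y.2 := by
      intro y
      rw [Finset.sum_const, Finset.card_univ]
      simp
    rw [Finset.sum_congr rfl (fun y _ => hone y), Fintype.sum_prod_type]
    calc ∑ x : S, ∑ a : Fin K, p0 x * μ x a
        = ∑ x : S, p0 x * ∑ a, μ x a := by
          simp [Finset.mul_sum]
      _ = ∑ x, p0 x := by simp [hμsum]
  | succ T ih =>
    intro p0 P μ hPsum hμsum
    rw [sum_pi_succ]
    have : ∀ y : S × Fin K, ∑ τ' : Fin (T+1) → S × Fin K, trajProb p0 P μ (Fin.cons y τ')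
        = p0 y.1 * μ y.1 y.2 := by
      intro y
      simp only [trajProb_cons]
      rw [← Finset.mul_sum, ih (P y.1 y.2) P μ hPsum hμsum, hPsum, mul_one]
    rw [Finset.sum_congr rfl (fun y _ => this y), Fintype.sum_prod_type]
    calc ∑ x : S, ∑ a : Fin K, p0 x * μ x a
        = ∑ x : S, p0 x * ∑ a, μ x a := by simp [Finset.mul_sum]
      _ = ∑ x, p0 x := by simp [hμsum]


lemma ratioProd_cons_zero {S : Type*} {K T : ℕ} (μ π : S → Fin K → ℝ)
    (y : S × Fin K) (τ' : Fin (T + 1) → S × Fin K) :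
    ratioProd μ π (Fin.cons y τ' : Fin (T + 2) → S × Fin K) 0 = 1 := by
  unfold ratioProd
  simp

lemma ratioProd_cons_succ {S : Type*} {K T : ℕ} (μ π : S → Fin K → ℝ)
    (y : S × Fin K) (τ' : Fin (T + 1) → S × Fin K) (t : ℕ) :
    ratioProd μ π (Fin.cons y τ' : Fin (T + 2) → S × Fin K) (t + 1)
      = ratio μ π y * ratioProd μ π τ' t := by
  set c : Fin (T + 2) → S × Fin K := Fin.cons y τ' with hcdef
  unfold ratioProd
  rw [Fin.prod_univ_succ]
  have h0 : c 0 = y := rfl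
  have key : ∀ s : Fin (T + 1),
      (if ((s.succ : Fin (T + 2)) : ℕ) < t + 1 then ratio μ π (c s.succ) else 1)
        = (if (s : ℕ) < t then ratio μ π (τ' s) else 1) := by
    intro s
    have hc : c s.succ = τ' s := Fin.cons_succ _ _ _
    have hcond : (((s.succ : Fin (T + 2)) : ℕ) < t + 1) ↔ ((s : ℕ) < t) := by
      simp [Fin.val_succ]
    rw [hc]
    by_cases h : (s : ℕ) < t
    · rw [if_pos h, if_pos (hcond.mpr h)]
    · rw [if_neg h, if_neg (fun hh => h (hcond.mp hh))]
  rw [Finset.prod_congr rfl (fun s _ => key s), h0, if_pos (by simp)]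

lemma est_cons {S : Type*} {K T : ℕ} (μ π : S → Fin K → ℝ) (γ : ℝ)
    (r : S → Fin K → ℝ) (Q : ℕ → S → Fin K → ℝ) (V : ℕ → S → ℝ)
    (y : S × Fin K) (τ' : Fin (T + 1) → S × Fin K) :
    (∑ t : Fin (T + 2),
      if (t : ℕ) < T + 1 then
        γ ^ (t : ℕ) * ratioProd μ π (Fin.cons y τ' : Fin (T + 2) → S × Fin K) (t : ℕ) *
          (ratio μ π ((Fin.cons y τ' : Fin (T + 2) → S × Fin K) t) *
            (r ((Fin.cons y τ' : Fin (T + 2) → S × Fin K) t).1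
                ((Fin.cons y τ' : Fin (T + 2) → S × Fin K) t).2
              - Q (t : ℕ) ((Fin.cons y τ' : Fin (T + 2) → S × Fin K) t).1
                  ((Fin.cons y τ' : Fin (T + 2) → S × Fin K) t).2)
            + V (t : ℕ) ((Fin.cons y τ' : Fin (T + 2) → S × Fin K) t).1)
      else 0)
    = (ratio μ π y * (r y.1 y.2 - Q 0 y.1 y.2) + V 0 y.1)
      + γ * ratio μ π y *
        (∑ t : Fin (T + 1),
          if (t : ℕ) < T then
            γ ^ (t : ℕ) * ratioProd μ π τ' (t : ℕ) *
              (ratio μ π (τ' t) *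
                (r (τ' t).1 (τ' t).2 - Q ((t : ℕ) + 1) (τ' t).1 (τ' t).2)
                + V ((t : ℕ) + 1) (τ' t).1)
          else 0) := by
  set c : Fin (T + 2) → S × Fin K := Fin.cons y τ' with hcdef
  rw [Fin.sum_univ_succ]
  have h0 : c 0 = y := rfl
  have key : ∀ t : Fin (T + 1),
      (if ((t.succ : Fin (T + 2)) : ℕ) < T + 1 then
        γ ^ ((t.succ : Fin (T + 2)) : ℕ) *
          ratioProd μ π c ((t.succ : Fin (T + 2)) : ℕ) *
          (ratio μ π (c t.succ) *
            (r (c t.succ).1 (c t.succ).2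
              - Q ((t.succ : Fin (T + 2)) : ℕ) (c t.succ).1 (c t.succ).2)
            + V ((t.succ : Fin (T + 2)) : ℕ) (c t.succ).1)
      else 0)
      = γ * ratio μ π y *
        (if (t : ℕ) < T then
          γ ^ (t : ℕ) * ratioProd μ π τ' (t : ℕ) *
            (ratio μ π (τ' t) *
              (r (τ' t).1 (τ' t).2 - Q ((t : ℕ) + 1) (τ' t).1 (τ' t).2)
              + V ((t : ℕ) + 1) (τ' t).1)
        else 0) := by
    intro t
    have hc : c t.succ = τ' t := Fin.cons_succ _ _ _
    have hv : ((t.succ : Fin (T + 2)) : ℕ) = (t : ℕ) + 1 := by simp [Fin.val_succ]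
    rw [hc, hv]
    by_cases h : (t : ℕ) < T
    · rw [if_pos (by omega), if_pos h, ratioProd_cons_succ]
      ring
    · rw [if_neg (by omega), if_neg h, mul_zero]
  rw [Finset.sum_congr rfl (fun t _ => key t), ← Finset.mul_sum, h0,
    if_pos (by simp)]
  have h00 : ((0 : Fin (T + 2)) : ℕ) = 0 := rfl
  rw [h00, hcdef, ratioProd_cons_zero]
  simp

lemma aux_dr {S : Type*} [Fintype S] {K : ℕ}
    (P : S → Fin K → S → ℝ) (μ π : S → Fin K → ℝ)
    (hPsum : ∀ x a, ∑ x', P x a x' = 1) (hμsum : ∀ x, ∑ a, μ x a = 1)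
    (hμρ : ∀ y : S × Fin K, μ y.1 y.2 * ratio μ π y = π y.1 y.2)
    (γ : ℝ) (r : S → Fin K → ℝ) :
    ∀ (T : ℕ) (p0 : S → ℝ) (Q : ℕ → S → Fin K → ℝ) (V : ℕ → S → ℝ),
    (∀ t < T, ∀ x a, Q t x a = r x a + γ * ∑ x', P x a x' * V (t + 1) x') →
    (∀ x, V T x = 0) →
    trajExpec p0 P μ
        (fun τ => ∑ t : Fin (T + 1),
          if (t : ℕ) < T then
            γ ^ (t : ℕ) * ratioProd μ π τ (t : ℕ) *
              (ratio μ π (τ t) * (r (τ t).1 (τ t).2 - Q (t : ℕ) (τ t).1 (τ t).2)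
                + V (t : ℕ) (τ t).1)
          else 0)
      = ∑ x, p0 x * V 0 x := by
  intro T
  induction T with
  | zero =>
    intro p0 Q V hQ hVT
    unfold trajExpec
    simp [hVT]
  | succ T ih =>
    intro p0 Q V hQ hVT
    unfold trajExpec
    rw [sum_pi_succ]
    simp only []
    have ihy : ∀ y : S × Fin K,
        ∑ τ' : Fin (T + 1) → S × Fin K, trajProb (P y.1 y.2) P μ τ' *
          (∑ t : Fin (T + 1), if (t : ℕ) < T then
            γ ^ (t : ℕ) * ratioProd μ π τ' (t : ℕ) *
              (ratio μ π (τ' t) *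
                (r (τ' t).1 (τ' t).2 - Q ((t : ℕ) + 1) (τ' t).1 (τ' t).2)
                + V ((t : ℕ) + 1) (τ' t).1)
          else 0)
        = ∑ x', P y.1 y.2 x' * V 1 x' := by
      intro y
      have h := ih (P y.1 y.2) (fun t => Q (t + 1)) (fun t => V (t + 1))
        (fun t ht x a => hQ (t + 1) (by omega) x a) (fun x => hVT x)
      unfold trajExpec at h
      exact h
    have step : ∀ (y : S × Fin K) (τ' : Fin (T + 1) → S × Fin K),
        trajProb p0 P μ (Fin.cons y τ') *
          (∑ t : Fin (T + 2), if (t : ℕ) < T + 1 then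
            γ ^ (t : ℕ) * ratioProd μ π (Fin.cons y τ' : Fin (T + 2) → S × Fin K) (t : ℕ) *
              (ratio μ π ((Fin.cons y τ' : Fin (T + 2) → S × Fin K) t) *
                (r ((Fin.cons y τ' : Fin (T + 2) → S × Fin K) t).1
                    ((Fin.cons y τ' : Fin (T + 2) → S × Fin K) t).2
                  - Q (t : ℕ) ((Fin.cons y τ' : Fin (T + 2) → S × Fin K) t).1
                      ((Fin.cons y τ' : Fin (T + 2) → S × Fin K) t).2)
                + V (t : ℕ) ((Fin.cons y τ' : Fin (T + 2) → S × Fin K) t).1)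
          else 0)
        = p0 y.1 * μ y.1 y.2 *
            ((ratio μ π y * (r y.1 y.2 - Q 0 y.1 y.2) + V 0 y.1) *
                trajProb (P y.1 y.2) P μ τ'
              + γ * ratio μ π y *
                (trajProb (P y.1 y.2) P μ τ' *
                  (∑ t : Fin (T + 1), if (t : ℕ) < T then
                    γ ^ (t : ℕ) * ratioProd μ π τ' (t : ℕ) *
                      (ratio μ π (τ' t) *
                        (r (τ' t).1 (τ' t).2 - Q ((t : ℕ) + 1) (τ' t).1 (τ' t).2)
                        + V ((t : ℕ) + 1) (τ' t).1)
                  else 0))) := by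
      intro y τ'
      rw [trajProb_cons, est_cons]
      ring
    rw [Finset.sum_congr rfl (fun y _ => Finset.sum_congr rfl (fun τ' _ => step y τ'))]
    have collapse : ∀ y : S × Fin K,
        ∑ τ' : Fin (T + 1) → S × Fin K,
          p0 y.1 * μ y.1 y.2 *
            ((ratio μ π y * (r y.1 y.2 - Q 0 y.1 y.2) + V 0 y.1) *
                trajProb (P y.1 y.2) P μ τ'
              + γ * ratio μ π y *
                (trajProb (P y.1 y.2) P μ τ' *
                  (∑ t : Fin (T + 1), if (t : ℕ) < T then
                    γ ^ (t : ℕ) * ratioProd μ π τ' (t : ℕ) *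
                      (ratio μ π (τ' t) *
                        (r (τ' t).1 (τ' t).2 - Q ((t : ℕ) + 1) (τ' t).1 (τ' t).2)
                        + V ((t : ℕ) + 1) (τ' t).1)
                  else 0)))
        = p0 y.1 * μ y.1 y.2 * V 0 y.1 := by
      intro y
      rw [← Finset.mul_sum, Finset.sum_add_distrib, ← Finset.mul_sum, ← Finset.mul_sum,
        trajProb_total T (P y.1 y.2) P μ hPsum hμsum, hPsum y.1 y.2, ihy y]
      have hz : r y.1 y.2 - Q 0 y.1 y.2 + γ * (∑ x', P y.1 y.2 x' * V 1 x') = 0 := by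
        rw [hQ 0 (by omega) y.1 y.2]; ring
      linear_combination
        (p0 y.1 * (r y.1 y.2 - Q 0 y.1 y.2 + γ * ∑ x', P y.1 y.2 x' * V 1 x')) * hμρ y
          + (p0 y.1 * π y.1 y.2) * hz
    rw [Finset.sum_congr rfl (fun y _ => collapse y), Fintype.sum_prod_type]
    refine Finset.sum_congr rfl (fun x _ => ?_)
    calc ∑ a, p0 x * μ x a * V 0 x
        = ∑ a, p0 x * V 0 x * μ x a := Finset.sum_congr rfl (fun a _ => by ring)
      _ = p0 x * V 0 x * ∑ a, μ x a := (Finset.mul_sum _ _ _).symm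
      _ = p0 x * V 0 x := by rw [hμsum x, mul_one]

/-- telescoping DR identity: with correctly specified
finite-horizon value functions `Q^t, V^t` of the target policy `π`
(`V^T ≡ 0`), the DR estimator
`V̂ = ∑_{t<T} γ^t ρ_{0:t-1}[ρ_t(r_t - Q^t(x_t,a_t)) + V^t(x_t)]`
along a trajectory from `μ` satisfies `E_μ[V̂] = E_{x₀}[V^0(x₀)]`. -/
theorem stmt_14 (S : Type*) [Fintype S] [DecidableEq S]
    (K T : ℕ) (hK : 1 ≤ K) (hT : 0 < T)
    (γ : ℝ) (hγ0 : 0 ≤ γ) (hγ1 : γ ≤ 1)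
    (p0 : S → ℝ) (hp0 : ∀ x, 0 ≤ p0 x) (hp0sum : ∑ x, p0 x = 1)
    (P : S → Fin K → S → ℝ)
    (hP : ∀ x a x', 0 ≤ P x a x') (hPsum : ∀ x a, ∑ x', P x a x' = 1)
    (μ π : S → Fin K → ℝ)
    (hμnonneg : ∀ x a, 0 ≤ μ x a) (hμsum : ∀ x, ∑ a, μ x a = 1)
    (hπnonneg : ∀ x a, 0 ≤ π x a) (hπsum : ∀ x, ∑ a, π x a = 1)
    (hAC : ∀ x a, 0 < π x a → 0 < μ x a)
    (r : S → Fin K → ℝ)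
    (Q : ℕ → S → Fin K → ℝ) (V : ℕ → S → ℝ)
    (hQ : ∀ t < T, ∀ x a,
      Q t x a = r x a + γ * ∑ x', P x a x' * V (t + 1) x')
    (hV : ∀ t < T, ∀ x, V t x = ∑ a, π x a * Q t x a)
    (hVT : ∀ x, V T x = 0) :
    trajExpec p0 P μ
        (fun τ => ∑ t : Fin (T + 1),
          if (t : ℕ) < T then
            γ ^ (t : ℕ) * ratioProd μ π τ (t : ℕ) *
              (ratio μ π (τ t) * (r (τ t).1 (τ t).2 - Q (t : ℕ) (τ t).1 (τ t).2)
                + V (t : ℕ) (τ t).1)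
          else 0)
      = ∑ x, p0 x * V 0 x := by
  have hμρ : ∀ y : S × Fin K, μ y.1 y.2 * ratio μ π y = π y.1 y.2 := by
    intro y
    unfold ratio
    by_cases h : μ y.1 y.2 = 0
    · have hπ0 : π y.1 y.2 = 0 := by
        by_contra hne
        have hpos : 0 < π y.1 y.2 := lt_of_le_of_ne (hπnonneg _ _) (Ne.symm hne)
        exact absurd (hAC _ _ hpos) (by simp [h])
      simp [h, hπ0]
    · field_simp
  exact aux_dr P μ π hPsum hμsum hμρ γ r T p0 Q V hQ hVT
end
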